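/- Fix A > 0 and a wavenumber α > 0, and for B > 0 set κ_α(B) := √(α² + B) and λ*_α(B) := (α²A/2)·(κ_α(B)²/B)·[1 − tanh(κ_α(B))/κ_α(B)]^{−1}. Then the map B ↦ λ*_α(B) is strictly decreasing on (0,∞) and λ*_α(B) → α²A/2 as B → ∞. -/

import Mathlib

/-!
With `κ = √(α² + B)`, which increases with `B`, one has
`λ*_α(B) = (α²A/2) · (1 + α²/B) · (1 - tanh κ / κ)⁻¹`.
The first factor decreases strictly to `1`. The function `tanh x / x` takes values in `(0, 1)`
on `(0, ∞)`, decreases strictly there and tends to `0` at infinity, so the second factor is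
positive and also decreases strictly to `1`.
-/

/-- `κ_α(B) = √(α² + B)`. -/
noncomputable def kappaAlpha (α B : ℝ) : ℝ := Real.sqrt (α ^ 2 + B)

/-- The squared maximal sloshing frequency `λ*_α(B)` for wavenumber `α > 0`
with surface tension. -/
noncomputable def lamStarAlpha (A α B : ℝ) : ℝ :=
  (α ^ 2 * A / 2) * (kappaAlpha α B ^ 2 / B) *
    (1 - Real.tanh (kappaAlpha α B) / kappaAlpha α B)⁻¹

open Set Filter Topology

namespace Real

theorem hasDerivAt_tanh (x : ℝ) : HasDerivAt tanh (1 / cosh x ^ 2) x := by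
  have hcosh : cosh x ≠ 0 := (cosh_pos x).ne'
  have h := (hasDerivAt_sinh x).div (hasDerivAt_cosh x) hcosh
  rwa [show sinh / cosh = tanh from funext fun y ↦ (tanh_eq_sinh_div_cosh y).symm,
    ← sq, ← sq, cosh_sq_sub_sinh_sq x] at h

theorem continuous_tanh : Continuous tanh :=
  continuous_iff_continuousAt.2 fun x ↦ (hasDerivAt_tanh x).continuousAt

theorem tanh_pos {x : ℝ} (hx : 0 < x) : 0 < tanh x := by
  rw [tanh_eq_sinh_div_cosh]
  exact div_pos (sinh_pos_iff.2 hx) (cosh_pos x)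

theorem tanh_lt_self {x : ℝ} (hx : 0 < x) : tanh x < x := by
  have hmono : StrictMonoOn (fun y ↦ y - tanh y) (Ici 0) := by
    refine strictMonoOn_of_hasDerivWithinAt_pos (convex_Ici 0)
      (continuous_id.sub continuous_tanh).continuousOn
      (fun y _ ↦ ((hasDerivAt_id y).sub (hasDerivAt_tanh y)).hasDerivWithinAt) ?_
    intro y hy
    rw [interior_Ici] at hy
    rw [sub_pos, div_lt_one (by positivity)]
    exact one_lt_pow₀ (one_lt_cosh.2 (ne_of_gt hy)) two_ne_zero
  simpa using hmono self_mem_Ici hx.le hx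

theorem tanh_div_self_lt_one {x : ℝ} (hx : 0 < x) : tanh x / x < 1 :=
  (div_lt_one hx).2 (tanh_lt_self hx)

theorem strictAntiOn_tanh_div_self : StrictAntiOn (fun x ↦ tanh x / x) (Ioi 0) := by
  refine strictAntiOn_of_hasDerivWithinAt_neg (convex_Ioi 0)
    (continuous_tanh.continuousOn.div continuousOn_id fun x hx ↦ ne_of_gt hx)
    (fun x hx ↦ ((hasDerivAt_tanh x).div (hasDerivAt_id x)
      (ne_of_gt (interior_subset hx : (0 : ℝ) < x))).hasDerivWithinAt) ?_
  intro x hx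
  rw [interior_Ioi] at hx
  have hx : (0 : ℝ) < x := hx
  -- The numerator `x / cosh² x - tanh x` has the sign of `2x - sinh (2x)`.
  have hsinh : 2 * x < 2 * sinh x * cosh x := sinh_two_mul x ▸ self_lt_sinh_iff.2 (by positivity)
  have hcosh := cosh_pos x
  apply div_neg_of_neg_of_pos _ (by positivity)
  rw [tanh_eq_sinh_div_cosh, id, mul_one, sub_neg, one_div_mul_eq_div,
    div_lt_div_iff₀ (by positivity) hcosh]
  nlinarith

theorem tendsto_tanh_div_self_atTop : Tendsto (fun x ↦ tanh x / x) atTop (𝓝 0) := by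
  refine squeeze_zero' ?_ ?_ tendsto_inv_atTop_zero
  · filter_upwards [eventually_gt_atTop 0] with x hx
    exact div_nonneg (tanh_pos hx).le hx.le
  · filter_upwards [eventually_gt_atTop 0] with x hx
    rw [div_eq_mul_inv]
    exact mul_le_of_le_one_left (inv_nonneg.2 hx.le) (tanh_lt_one x).le

end Real

theorem StrictAntiOn.mul_of_nonneg {α β : Type*} [Preorder α] [MulZeroClass β] [Preorder β]
    [PosMulStrictMono β] [MulPosMono β] {f g : α → β} {s : Set α}
    (hf : StrictAntiOn f s) (hg : StrictAntiOn g s) (hf₀ : ∀ x ∈ s, 0 ≤ f x)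
    (hg₀ : ∀ x ∈ s, 0 ≤ g x) : StrictAntiOn (fun x ↦ f x * g x) s :=
  fun _ hx _ hy hxy ↦ mul_lt_mul'' (hf hx hy hxy) (hg hx hy hxy) (hf₀ _ hy) (hg₀ _ hy)

section kappaAlpha

variable {α B : ℝ}

theorem kappaAlpha_pos (hB : 0 < B) : 0 < kappaAlpha α B :=
  Real.sqrt_pos.2 (by positivity)

theorem kappaAlpha_sq (hB : 0 ≤ B) : kappaAlpha α B ^ 2 = α ^ 2 + B :=
  Real.sq_sqrt (by positivity)

theorem strictMonoOn_kappaAlpha : StrictMonoOn (kappaAlpha α) (Ici 0) :=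
  fun _ hx _ _ hxy ↦ Real.sqrt_lt_sqrt (add_nonneg (sq_nonneg α) hx) (by linarith)

theorem tendsto_kappaAlpha_atTop : Tendsto (kappaAlpha α) atTop atTop :=
  Real.tendsto_sqrt_atTop.comp (tendsto_atTop_add_const_left _ _ tendsto_id)

theorem strictAntiOn_inv_one_sub_tanh_div_kappaAlpha :
    StrictAntiOn (fun B ↦ (1 - Real.tanh (kappaAlpha α B) / kappaAlpha α B)⁻¹) (Ioi 0) := by
  intro x hx y hy hxy
  have hκx := kappaAlpha_pos (α := α) hx
  have hκ := (strictMonoOn_kappaAlpha (α := α)).mono Ioi_subset_Ici_self hx hy hxy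
  have hanti := Real.strictAntiOn_tanh_div_self hκx (hκx.trans hκ) hκ
  exact inv_strictAnti₀ (sub_pos.2 (Real.tanh_div_self_lt_one hκx)) (by linarith)

end kappaAlpha

theorem lamStarAlpha_eq (A α : ℝ) {B : ℝ} (hB : 0 < B) :
    lamStarAlpha A α B = α ^ 2 * A / 2 *
      ((1 + α ^ 2 / B) * (1 - Real.tanh (kappaAlpha α B) / kappaAlpha α B)⁻¹) := by
  rw [lamStarAlpha, kappaAlpha_sq hB.le, add_div, div_self hB.ne', add_comm 1, mul_assoc]

theorem lamStarAlpha_monotone_limit (A α : ℝ) (hA : 0 < A) (hα : 0 < α) :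
    StrictAntiOn (lamStarAlpha A α) (Set.Ioi 0) ∧
    Filter.Tendsto (lamStarAlpha A α) Filter.atTop (nhds (α ^ 2 * A / 2)) := by
  have hC : 0 < α ^ 2 * A / 2 := by positivity
  have hrewrite : EqOn (fun B ↦ α ^ 2 * A / 2 *
      ((1 + α ^ 2 / B) * (1 - Real.tanh (kappaAlpha α B) / kappaAlpha α B)⁻¹))
      (lamStarAlpha A α) (Ioi 0) := fun B hB ↦ (lamStarAlpha_eq A α hB).symm
  constructor
  · have hfirst : StrictAntiOn (fun B : ℝ ↦ 1 + α ^ 2 / B) (Ioi 0) := fun x hx y _ hxy ↦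
      add_lt_add_right (div_lt_div_of_pos_left (by positivity) hx hxy) 1
    refine ((strictMono_mul_left_of_pos hC).comp_strictAntiOn
      (hfirst.mul_of_nonneg strictAntiOn_inv_one_sub_tanh_div_kappaAlpha ?_ ?_)).congr hrewrite
    · exact fun B hB ↦ (add_pos one_pos (div_pos (by positivity) hB)).le
    · exact fun B hB ↦ (inv_pos.2 (sub_pos.2 (Real.tanh_div_self_lt_one (kappaAlpha_pos hB)))).le
  · have hfirst : Tendsto (fun B : ℝ ↦ 1 + α ^ 2 / B) atTop (𝓝 1) := by
      simpa using tendsto_const_nhds.add ((tendsto_const_nhds (x := α ^ 2)).div_atTop tendsto_id)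
    have hsecond : Tendsto (fun B ↦ (1 - Real.tanh (kappaAlpha α B) / kappaAlpha α B)⁻¹)
        atTop (𝓝 1) := by
      simpa using ((Real.tendsto_tanh_div_self_atTop.comp tendsto_kappaAlpha_atTop).const_sub
        1).inv₀ (by norm_num)
    refine (tendsto_congr' (eventuallyEq_of_mem (Ioi_mem_atTop 0) hrewrite)).1 ?_
    simpa using (hfirst.mul hsecond).const_mul (α ^ 2 * A / 2)
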